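/- arXiv:2202.10254 — 4 statements merged into one kernel-verified Lean document; each statement's English description precedes it below -/
import Mathlib

section
/- In any tree T, for every vertex v and every path p in T containing v, if s_p denotes the unique vertex of p minimizing distance to a fixed root w, then the subpath of p from any vertex u of p to s_p is internally disjoint from the path from s_p to w, and the concatenation of the u-to-s_p subpath of p with the s_p-to-w path equals the unique u-to-w path in T. -/
/-!
In a tree every path is a shortest path, so along the path `R` from `s` to the root the distance
to the root strictly decreases. A vertex of `P` other than `s` lying on `R` would therefore be
closer to the root than `s`, contradicting the minimality of `s`; hence the `u`-`s` path inside
`P` meets `R` only in `s`, and gluing the two gives a path.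
-/

namespace SimpleGraph
variable {V : Type*} {G : SimpleGraph V}

theorem IsAcyclic.length_eq_dist_of_isPath (hG : G.IsAcyclic) {u v : V} {p : G.Walk u v}
    (hp : p.IsPath) : p.length = G.dist u v := by
  obtain ⟨q, hq, hq_len⟩ := p.reachable.exists_path_of_dist
  have := hG.subsingleton_path u v
  have hpq : p = q := congrArg Subtype.val (Subsingleton.elim (α := G.Path u v) ⟨p, hp⟩ ⟨q, hq⟩)
  rw [hpq, hq_len]

namespace Walk

theorem dist_lt_of_length_eq_dist [DecidableEq V] {u v x : V} {p : G.Walk u v}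
    (hp : p.length = G.dist u v) (hx : x ∈ p.support) (hxu : x ≠ u) :
    G.dist x v < G.dist u v :=
  calc G.dist x v ≤ (p.dropUntil x hx).length := dist_le _
    _ < p.length := length_dropUntil_lt_length hx hxu
    _ = G.dist u v := hp

theorem exists_isPath_support_subset [DecidableEq V] {a b u v : V} (p : G.Walk a b)
    (hu : u ∈ p.support) (hv : v ∈ p.support) :
    ∃ q : G.Walk u v, q.IsPath ∧ q.support ⊆ p.support := by
  refine ⟨((p.takeUntil u hu).reverse.append (p.takeUntil v hv)).bypass, bypass_isPath _, ?_⟩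
  intro x hx
  have hx := support_bypass_subset_support _ hx
  rw [mem_support_append_iff, support_reverse, List.mem_reverse] at hx
  exact hx.elim (fun h => p.support_takeUntil_subset_support hu h)
    (fun h => p.support_takeUntil_subset_support hv h)

theorem IsPath.append {u v w : V} {p : G.Walk u v} {q : G.Walk v w} (hp : p.IsPath)
    (hq : q.IsPath) (hpq : ∀ x ∈ p.support, x ∈ q.support → x = v) : (p.append q).IsPath := by
  have hq_nodup := hq.support_nodup
  rw [← cons_tail_support, List.nodup_cons] at hq_nodup
  rw [isPath_def, support_append, List.nodup_append]
  refine ⟨hp.support_nodup, hq_nodup.2, fun x hx y hy hxy => ?_⟩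
  subst hxy
  obtain rfl := hpq x hx (List.mem_of_mem_tail hy)
  exact hq_nodup.1 hy

end Walk
end SimpleGraph

theorem stmt_1_general {V : Type*} (T : SimpleGraph V) (hT : T.IsTree)
    (w : V) {a b : V} (P : T.Walk a b)
    (s : V) (hs : s ∈ P.support)
    (hmin : ∀ v ∈ P.support, T.dist s w ≤ T.dist v w)
    (u : V) (hu : u ∈ P.support) :
    ∃ Q : T.Walk u s, Q.IsPath ∧ (∀ v ∈ Q.support, v ∈ P.support) ∧
      ∀ R : T.Walk s w, R.IsPath →
        (∀ v ∈ Q.support, v ∈ R.support → v = s) ∧ (Q.append R).IsPath := by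
  classical
  obtain ⟨Q, hQ, hQP⟩ := P.exists_isPath_support_subset hu hs
  refine ⟨Q, hQ, fun v hv => hQP hv, fun R hR => ?_⟩
  have hR_len := hT.isAcyclic.length_eq_dist_of_isPath hR
  have hdisj : ∀ v ∈ Q.support, v ∈ R.support → v = s := fun v hvQ hvR => by
    by_contra hvs
    exact (hmin v (hQP hvQ)).not_gt (SimpleGraph.Walk.dist_lt_of_length_eq_dist hR_len hvR hvs)
  exact ⟨hdisj, hQ.append hR hdisj⟩

/-- In a tree rooted at `w`, for any vertex `u` of a path `P` with peak `s`, the subpath of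
`P` from `u` to `s` is internally disjoint from the `s`-`w` path, and their concatenation
is a path, hence the unique `u`-`w` path in the tree. -/
theorem stmt_1 {V : Type*} [Fintype V] (T : SimpleGraph V) (hT : T.IsTree)
    (w : V) {a b : V} (P : T.Walk a b) (hP : P.IsPath)
    (s : V) (hs : s ∈ P.support)
    (hmin : ∀ v ∈ P.support, T.dist s w ≤ T.dist v w)
    (u : V) (hu : u ∈ P.support) :
    ∃ Q : T.Walk u s, Q.IsPath ∧ (∀ v ∈ Q.support, v ∈ P.support) ∧
      ∀ R : T.Walk s w, R.IsPath →
        (∀ v ∈ Q.support, v ∈ R.support → v = s) ∧ (Q.append R).IsPath :=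
  stmt_1_general T hT w P s hs hmin u hu
end

section
/- Let T be a tree and define s(T) = the sum over all vertices v of floor(deg(v)/4). Then T contains at least ceil(s(T)/2) pairwise edge-disjoint subtrees each isomorphic to the star K_{1,4}. -/
open SimpleGraph Walk Finset

private lemma my_concat_isPath {V : Type*} {G : SimpleGraph V} {u v w : V} {p : G.Walk u v}
    (hp : p.IsPath) (h : G.Adj v w) (hw : w ∉ p.support) : (p.concat h).IsPath := by
  rw [← Walk.isPath_reverse_iff, Walk.reverse_concat]
  exact hp.reverse.cons (by simpa using hw)

private lemma my_parity_adj {V : Type*} [DecidableEq V] {G : SimpleGraph V} (hT : G.IsTree) (r : V)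
    (P : ∀ v, G.Walk r v) (hP : ∀ v, (P v).IsPath) {u v : V} (h : G.Adj u v) :
    (P u).length % 2 ≠ (P v).length % 2 := by
  have uniq : ∀ (a b : V) (p q : G.Walk a b), p.IsPath → q.IsPath → p = q := by
    intro a b p q hp hq
    obtain ⟨w, -, hw⟩ := hT.existsUnique_path a b
    rw [hw p hp, hw q hq]
  by_cases hv : v ∈ (P u).support
  · have h1 : ((P u).takeUntil v hv) = P v := uniq _ _ _ _ ((hP u).takeUntil hv) (hP v)
    have h2 : ((P u).dropUntil v hv) = Walk.cons h.symm Walk.nil := by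
      refine uniq _ _ _ _ ((hP u).dropUntil hv) ?_
      simp [Walk.cons_isPath_iff, h.ne']
    have h3 := congrArg Walk.length ((P u).take_spec hv)
    rw [Walk.length_append, h1, h2] at h3
    simp only [Walk.length_cons, Walk.length_nil] at h3
    omega
  · have h4 : (P u).concat h = P v := uniq _ _ _ _ (my_concat_isPath (hP u) h hv) (hP v)
    have h5 := congrArg Walk.length h4
    rw [Walk.length_concat] at h5
    omega

section Grp
variable {V : Type*} [Fintype V] [DecidableEq V] (G : SimpleGraph V) [DecidableRel G.Adj]

private noncomputable def myGrp (v : V) (n : ℕ) : Finset V :=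
  (((G.neighborFinset v).toList.drop (4 * n)).take 4).toFinset

private lemma myGrp_card {v : V} {n : ℕ} (hn : n < G.degree v / 4) :
    (myGrp G v n).card = 4 := by
  have hnd : (((G.neighborFinset v).toList.drop (4 * n)).take 4).Nodup :=
    ((List.take_sublist _ _).trans (List.drop_sublist _ _)).nodup (Finset.nodup_toList _)
  rw [myGrp, List.toFinset_card_of_nodup hnd, List.length_take, List.length_drop,
    Finset.length_toList, ← G.card_neighborFinset_eq_degree] at *
  omega

private lemma myGrp_adj {v x : V} {n : ℕ} (hx : x ∈ myGrp G v n) : G.Adj v x := by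
  rw [myGrp, List.mem_toFinset] at hx
  have := List.drop_subset (4 * n) (G.neighborFinset v).toList (List.take_subset _ _ hx)
  rw [Finset.mem_toList, SimpleGraph.mem_neighborFinset] at this
  exact this

private lemma myGrp_disjoint {v x : V} {m n : ℕ} (hmn : m ≠ n)
    (hm : x ∈ myGrp G v m) (hn : x ∈ myGrp G v n) : False := by
  wlog h : m < n generalizing m n
  · exact this hmn.symm hn hm (by omega)
  rw [myGrp, List.mem_toFinset] at hm hn
  set l := (G.neighborFinset v).toList with hl
  have key : (l.take (4*m+4)).drop (4*m) = (l.drop (4*m)).take 4 := by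
    rw [List.drop_take]; congr 1; omega
  have hm' : x ∈ (l.take (4*m+4)).drop (4*m) := by rw [key]; exact hm
  have h1 : x ∈ l.take (4 * m + 4) := List.drop_subset _ _ hm'
  have h2 : x ∈ l.drop (4 * n) := List.take_subset _ _ hn
  exact List.disjoint_take_drop (Finset.nodup_toList _) (by omega) h1 h2

end Grp

/-- Any finite tree `T` contains at least `⌈(∑ v, ⌊deg v / 4⌋) / 2⌉` pairwise edge-disjoint
subtrees isomorphic to the star `K_{1,4}` (each given by a center and 4 of its neighbors). -/
theorem stmt_2 {V : Type*} [Fintype V] [DecidableEq V] (T : SimpleGraph V)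
    [DecidableRel T.Adj] (hT : T.IsTree) :
    ∃ (k : ℕ) (c : Fin k → V) (N : Fin k → Finset V),
      ((∑ v, T.degree v / 4) + 1) / 2 ≤ k ∧
      (∀ i, (N i).card = 4 ∧ ∀ x ∈ N i, T.Adj (c i) x) ∧
      (∀ i j : Fin k, i ≠ j → ∀ x ∈ N i, ∀ y ∈ N j, s(c i, x) ≠ s(c j, y)) := by
  classical
  obtain ⟨r⟩ := hT.isConnected.nonempty
  choose P hP using fun v => (hT.existsUnique_path r v).exists
  set col : V → Bool := fun v => decide ((P v).length % 2 = 0) with hcoldef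
  have hcol : ∀ u v, T.Adj u v → col u ≠ col v := by
    intro u v huv hc
    have := my_parity_adj hT r P hP huv
    simp only [hcoldef, decide_eq_decide] at hc
    omega
  set f : V → ℕ := fun v => T.degree v / 4 with hf
  have hsplit := Finset.sum_filter_add_sum_filter_not Finset.univ (fun v => col v = true) f
  -- choose the color class with the larger sum
  obtain ⟨b, A, hA, hAsum⟩ :
      ∃ (b : Bool) (A : Finset V), (∀ v ∈ A, col v = b) ∧
        (∑ v, f v + 1) / 2 ≤ ∑ v ∈ A, f v := by
    rcases le_total (∑ v ∈ Finset.univ.filter (fun v => col v = true), f v)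
        (∑ v ∈ Finset.univ.filter (fun v => ¬ col v = true), f v) with h | h
    · exact ⟨false, Finset.univ.filter (fun v => ¬ col v = true),
        fun v hv => by simpa using (Finset.mem_filter.mp hv).2, by omega⟩
    · exact ⟨true, Finset.univ.filter (fun v => col v = true),
        fun v hv => (Finset.mem_filter.mp hv).2, by omega⟩
  set S : Finset ((_ : V) × ℕ) := A.sigma (fun v => Finset.range (f v)) with hS
  have hcard : S.card = ∑ v ∈ A, f v := by
    rw [hS, Finset.card_sigma]; simp
  set e := S.equivFin with he
  refine ⟨S.card, fun i => (e.symm i).1.1, fun i => myGrp T (e.symm i).1.1 (e.symm i).1.2,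
    by rw [hcard]; exact hAsum, ?_, ?_⟩
  · intro i
    obtain ⟨hm1, hm2⟩ := Finset.mem_sigma.mp (e.symm i).2
    exact ⟨myGrp_card T (Finset.mem_range.mp hm2), fun x hx => myGrp_adj T hx⟩
  · intro i j hij x hx y hy hxy
    have hpq : (e.symm i).1 ≠ (e.symm j).1 := by
      intro h
      exact hij (e.symm.injective (Subtype.ext h))
    have hmi := Finset.mem_sigma.mp (e.symm i).2
    have hmj := Finset.mem_sigma.mp (e.symm j).2
    set p := (e.symm i).1 with hp
    set q := (e.symm j).1 with hq
    rw [Sym2.eq_iff] at hxy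
    rcases hxy with ⟨h1, h2⟩ | ⟨h1, h2⟩
    · -- same center
      subst h2
      have hvv : p.1 = q.1 := h1
      have hnn : p.2 ≠ q.2 := fun h => hpq (Sigma.ext hvv (heq_of_eq h))
      refine myGrp_disjoint T hnn hx ?_
      rw [hvv]
      exact hy
    · -- centers adjacent: contradiction with same color
      have hadj : T.Adj q.1 p.1 := by
        have := myGrp_adj T hy
        rw [← h1] at this
        exact this
      exact hcol _ _ hadj ((hA _ hmj.1).trans (hA _ hmi.1).symm)
end

section
/- The greedy algorithm for length-weighted disjoint interval allocation on the path of length l, which processes intervals in order of non-increasing length (ties broken left-to-right) and accepts every interval not sharing an edge with a previously accepted one, achieves total accepted length at least (l/(3l-3)) times the maximum total length of any pairwise edge-disjoint subset; i.e., it is strictly (3 - 3/l)-competitive. -/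
/-- Two integer intervals share a unit edge iff `max` of left ends `<` `min` of right ends. -/
def Blocks (p q : ℕ × ℕ) : Prop := max p.1 q.1 < min p.2 q.2

/-- Total length of a set of intervals. -/
def gain (S : List (ℕ × ℕ)) : ℕ := (S.map fun r => r.2 - r.1).sum

-- Greedy: accept every interval edge-disjoint from all previously accepted ones.
open scoped Classical in
noncomputable def greedyLW (I : List (ℕ × ℕ)) : List (ℕ × ℕ) :=
  I.foldl (fun acc r => if ∀ q ∈ acc, ¬ Blocks r q then acc ++ [r] else acc) []

/-!
Every interval `x` of the instance shares an edge with an accepted interval `g` at least as long: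
either `x` itself was accepted, or it was rejected because of an interval accepted earlier, hence
no shorter. Charge each interval of a feasible solution to such a `g`. The intervals charged to `g`
are edge-disjoint, lie in `[0, l]`, and, being no longer than `L = g.2 - g.1` while meeting `g`,
lie in a window of width `3L - 2` around `g`; so their total length is at most `min l (3L - 2)`,
and `l * min l (3L - 2) ≤ (3l - 3) * L`.
-/

theorem blocks_comm {p q : ℕ × ℕ} : Blocks p q ↔ Blocks q p := by
  simp only [Blocks, max_comm, min_comm]

theorem blocks_self {p : ℕ × ℕ} (h : p.1 < p.2) : Blocks p p := by
  simpa [Blocks] using h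

instance : Std.Symm fun p q : ℕ × ℕ => ¬ Blocks p q :=
  ⟨fun _ _ h hb => h (blocks_comm.1 hb)⟩

theorem nodup_of_pairwise_not_blocks {S : List (ℕ × ℕ)} (hval : ∀ r ∈ S, r.1 < r.2)
    (h : S.Pairwise fun p q => ¬ Blocks p q) : S.Nodup :=
  h.imp_of_mem fun hp _ hb => by rintro rfl; exact hb (blocks_self (hval _ hp))

theorem gain_eq_sum_toFinset {S : List (ℕ × ℕ)} (hval : ∀ r ∈ S, r.1 < r.2)
    (h : S.Pairwise fun p q => ¬ Blocks p q) :
    gain S = ∑ r ∈ S.toFinset, (r.2 - r.1) :=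
  (List.sum_toFinset _ (nodup_of_pairwise_not_blocks hval h)).symm

section Greedy

open scoped Classical

theorem greedyLW_append_singleton (I : List (ℕ × ℕ)) (r : ℕ × ℕ) :
    greedyLW (I ++ [r]) =
      if ∀ q ∈ greedyLW I, ¬ Blocks r q then greedyLW I ++ [r] else greedyLW I := by
  rw [greedyLW, List.foldl_append]
  rfl

theorem greedyLW_subset_append_singleton (I : List (ℕ × ℕ)) (r : ℕ × ℕ) :
    greedyLW I ⊆ greedyLW (I ++ [r]) := by
  rw [greedyLW_append_singleton]
  split_ifs
  exacts [List.subset_append_left _ _, List.Subset.refl _]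

theorem greedyLW_subset (I : List (ℕ × ℕ)) : greedyLW I ⊆ I := by
  induction I using List.reverseRecOn with
  | nil => simp [greedyLW]
  | append_singleton I r ih =>
    rw [greedyLW_append_singleton]
    split_ifs
    · exact List.append_subset.2 ⟨List.subset_append_of_subset_left _ ih, by simp⟩
    · exact List.subset_append_of_subset_left _ ih

theorem greedyLW_pairwise_not_blocks (I : List (ℕ × ℕ)) :
    (greedyLW I).Pairwise fun p q => ¬ Blocks p q := by
  induction I using List.reverseRecOn with
  | nil => simp [greedyLW]
  | append_singleton I r ih =>
    rw [greedyLW_append_singleton]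
    split_ifs with hr
    · simpa [List.pairwise_append, ih] using fun q hq hb => hr q hq (blocks_comm.1 hb)
    · exact ih

theorem exists_mem_greedyLW_blocks {I : List (ℕ × ℕ)} (hval : ∀ r ∈ I, r.1 < r.2)
    (hsort : I.Pairwise fun p q => q.2 - q.1 ≤ p.2 - p.1) :
    ∀ x ∈ I, ∃ g ∈ greedyLW I, Blocks x g ∧ x.2 - x.1 ≤ g.2 - g.1 := by
  induction I using List.reverseRecOn with
  | nil => simp
  | append_singleton I r ih =>
    rw [List.pairwise_append] at hsort
    have hr_shortest : ∀ q ∈ I, r.2 - r.1 ≤ q.2 - q.1 := fun q hq => hsort.2.2 q hq r (by simp)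
    intro x hx
    rcases List.mem_append.1 hx with hx | hx
    · obtain ⟨g, hg, hxg⟩ := ih (fun r hr => hval r (by simp [hr])) hsort.1 x hx
      exact ⟨g, greedyLW_subset_append_singleton I r hg, hxg⟩
    · obtain rfl : x = r := by simpa using hx
      by_cases hacc : ∀ q ∈ greedyLW I, ¬ Blocks x q
      · refine ⟨x, ?_, blocks_self (hval x (by simp)), le_rfl⟩
        rw [greedyLW_append_singleton, if_pos hacc]
        exact List.mem_append_right _ (List.mem_singleton_self x)
      · obtain ⟨q, hq, hxq⟩ : ∃ q ∈ greedyLW I, Blocks x q := by simpa using hacc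
        exact ⟨q, greedyLW_subset_append_singleton I x hq, hxq,
          hr_shortest q (greedyLW_subset I hq)⟩

end Greedy

theorem sum_length_le_of_pairwise_not_blocks {T : Finset (ℕ × ℕ)}
    (hT : (T : Set (ℕ × ℕ)).Pairwise fun p q => ¬ Blocks p q) {a b : ℕ}
    (hsub : ∀ r ∈ T, a ≤ r.1 ∧ r.2 ≤ b) :
    ∑ r ∈ T, (r.2 - r.1) ≤ b - a := by
  have hdisj : (T : Set (ℕ × ℕ)).PairwiseDisjoint fun r => Finset.Ico r.1 r.2 := by
    intro p hp q hq hpq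
    rw [Function.onFun, Finset.disjoint_iff_inter_eq_empty, Finset.Ico_inter_Ico]
    exact Finset.Ico_eq_empty (hT hp hq hpq)
  calc ∑ r ∈ T, (r.2 - r.1) = (T.biUnion fun r => Finset.Ico r.1 r.2).card := by
        simp only [Finset.card_biUnion hdisj, Nat.card_Ico]
    _ ≤ (Finset.Ico a b).card := Finset.card_le_card fun e he => by
        obtain ⟨r, hr, he⟩ := Finset.mem_biUnion.1 he
        have := hsub r hr
        simp only [Finset.mem_Ico] at he ⊢
        omega
    _ = b - a := Nat.card_Ico a b

theorem mul_le_of_le_min {l m L : ℕ} (hl : 2 ≤ l) (hm : m ≤ l) (hmL : m ≤ 3 * L - 2) :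
    l * m ≤ (3 * l - 3) * L := by
  rcases le_or_gt (3 * L) (2 * l) with h | h
  · calc l * m ≤ l * (3 * L - 2) := Nat.mul_le_mul_left l hmL
      _ ≤ (3 * l - 3) * L := by
        rcases Nat.eq_zero_or_pos L with rfl | hL
        · simp
        zify [show 2 ≤ 3 * L by omega, show 3 ≤ 3 * l by omega]
        nlinarith
  · calc l * m ≤ l * l := Nat.mul_le_mul_left l hm
      _ ≤ (3 * l - 3) * L := by
        zify [show 3 ≤ 3 * l by omega] at h hl ⊢
        nlinarith

theorem mul_sum_length_le_of_blocks {l : ℕ} (hl : 2 ≤ l) (g : ℕ × ℕ) {T : Finset (ℕ × ℕ)}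
    (hT : (T : Set (ℕ × ℕ)).Pairwise fun p q => ¬ Blocks p q) (hTl : ∀ r ∈ T, r.2 ≤ l)
    (hTg : ∀ r ∈ T, Blocks r g ∧ r.2 - r.1 ≤ g.2 - g.1) :
    l * ∑ r ∈ T, (r.2 - r.1) ≤ (3 * l - 3) * (g.2 - g.1) := by
  refine mul_le_of_le_min hl ?_ ?_
  · simpa using sum_length_le_of_pairwise_not_blocks hT (a := 0) fun r hr => ⟨Nat.zero_le _, hTl r hr⟩
  · refine (sum_length_le_of_pairwise_not_blocks hT (a := g.1 + 1 - (g.2 - g.1))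
      (b := g.2 - 1 + (g.2 - g.1)) fun r hr => ?_).trans (by omega)
    have := hTg r hr
    simp only [Blocks] at this
    omega

theorem stmt_8_general (l : ℕ) (hl : 2 ≤ l) (I : List (ℕ × ℕ))
    (hval : ∀ r ∈ I, r.1 < r.2 ∧ r.2 ≤ l)
    (hsort : I.Pairwise fun p q =>
      q.2 - q.1 < p.2 - p.1 ∨ (q.2 - q.1 = p.2 - p.1 ∧ p.1 ≤ q.1)) :
    ∀ S : List (ℕ × ℕ), S.Sublist I → S.Pairwise (fun p q => ¬ Blocks p q) →
      l * gain S ≤ (3 * l - 3) * gain (greedyLW I) := by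
  intro S hS hfeas
  have hSval : ∀ r ∈ S, r.1 < r.2 ∧ r.2 ≤ l := fun r hr => hval r (hS.subset hr)
  have hGval : ∀ r ∈ greedyLW I, r.1 < r.2 := fun r hr => (hval r (greedyLW_subset I hr)).1
  have hcover := exists_mem_greedyLW_blocks (fun r hr => (hval r hr).1)
    (hsort.imp fun h => by omega)
  choose! φ hφG hφ using fun x (hx : x ∈ S) => hcover x (hS.subset hx)
  calc l * gain S
      = ∑ g ∈ (greedyLW I).toFinset, l * ∑ x ∈ S.toFinset with φ x = g, (x.2 - x.1) := by
        rw [gain_eq_sum_toFinset (fun r hr => (hSval r hr).1) hfeas, ← Finset.mul_sum,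
          Finset.sum_fiberwise_of_maps_to fun x hx => by simpa using hφG x (by simpa using hx)]
    _ ≤ ∑ g ∈ (greedyLW I).toFinset, (3 * l - 3) * (g.2 - g.1) := by
        refine Finset.sum_le_sum fun g _ => ?_
        have hfiber : ∀ x ∈ S.toFinset.filter (φ · = g), x ∈ S ∧ φ x = g := by simp
        refine mul_sum_length_le_of_blocks hl g (hfeas.set_pairwise.mono fun x hx => (hfiber x hx).1)
          (fun x hx => (hSval x (hfiber x hx).1).2) fun x hx => ?_
        obtain ⟨hxS, rfl⟩ := hfiber x hx
        exact hφ x hxS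
    _ = (3 * l - 3) * gain (greedyLW I) := by
        rw [gain_eq_sum_toFinset hGval (greedyLW_pairwise_not_blocks I), Finset.mul_sum]

/-- Greedy on intervals sorted by non-increasing length (ties left-to-right) is strictly
`(3 - 3/l)`-competitive for length-weighted disjoint interval allocation:
`l * OPT ≤ (3l - 3) * GREEDY`. -/
theorem stmt_8 (l : ℕ) (hl : 2 ≤ l) (I : List (ℕ × ℕ))
    (hval : ∀ r ∈ I, r.1 < r.2 ∧ r.2 ≤ l) (hnd : I.Nodup)
    (hsort : I.Pairwise fun p q =>
      q.2 - q.1 < p.2 - p.1 ∨ (q.2 - q.1 = p.2 - p.1 ∧ p.1 ≤ q.1)) :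
    ∀ S : List (ℕ × ℕ), S.Sublist I → S.Pairwise (fun p q => ¬ Blocks p q) →
      l * gain S ≤ (3 * l - 3) * gain (greedyLW I) :=
  stmt_8_general l hl I hval hsort
end

section
/- Let T be a tree rooted at a leaf w, let p be a path whose peak s_p is an internal vertex of p with deg(s_p) <= 3, and let q, q' be two distinct paths, each with priority at most that of p (peak no farther from w, and if the peak equals s_p then it is not an endpoint of q or q'), and each edge-intersecting p. Then q and q' edge-intersect each other. -/
/-!
Root the tree at `w` and let `S` be the subtree hanging from the peak `sp` of `p`. Every vertex
of `p` lies in `S`, and `S` is attached to the rest of the tree only through `sp`. A path `q`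
of priority at most that of `p` has its peak outside `S`, or at `sp` as an inner vertex; if it
also shares an edge with `p`, it contains a vertex of `S \ {sp}`, so it passes through `sp`, and
not as an endpoint, since `q` minus an endpoint is a connected walk avoiding `sp`. Hence `q` and
`q'` each use two of the at most three edges at `sp`, and two such pairs share an edge.
-/

namespace SimpleGraph

open Walk

variable {V : Type*} {G : SimpleGraph V}

/-- The vertices that `s` separates from `w`; for a tree rooted at `w`, the subtree at `s`. -/
def subtree (G : SimpleGraph V) (w s : V) : Set V :=
  {v | ∀ W : G.Walk v w, s ∈ W.support}

lemma mem_subtree_self (w s : V) : s ∈ G.subtree w s :=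
  fun W => W.start_mem_support

lemma mem_subtree_of_walk {w s v u : V} (hv : v ∈ G.subtree w s) (W : G.Walk v u)
    (hW : s ∉ W.support) : u ∈ G.subtree w s :=
  fun R => ((W.mem_support_append_iff R).1 (hv (W.append R))).resolve_left hW

lemma Walk.mem_support_of_mem_subtree_of_notMem_subtree {w s v u a b : V}
    (W : G.Walk a b) (hv : v ∈ W.support) (hvs : v ∈ G.subtree w s)
    (hu : u ∈ W.support) (hus : u ∉ G.subtree w s) : s ∈ W.support := by
  classical
  by_contra hs
  have ha : a ∈ G.subtree w s := mem_subtree_of_walk hvs (W.takeUntil v hv).reverse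
    (by simpa using fun h => hs (W.support_takeUntil_subset_support hv h))
  exact hus (mem_subtree_of_walk ha (W.takeUntil u hu)
    fun h => hs (W.support_takeUntil_subset_support hu h))

lemma Walk.dist_lt_of_mem_support_of_length_eq_dist {s w t : V}
    (Q : G.Walk s w) (hQ : Q.length = G.dist s w) (ht : t ∈ Q.support) (hts : t ≠ s) :
    G.dist t w < G.dist s w := by
  classical
  exact hQ ▸ (dist_le _).trans_lt (length_dropUntil_lt_length ht hts)

lemma notMem_subtree_of_dist_le {w s u : V} (hu : G.Reachable u w) (hus : u ≠ s)
    (hd : G.dist u w ≤ G.dist s w) : u ∉ G.subtree w s := by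
  classical
  intro h
  obtain ⟨Q, hQ⟩ := hu.exists_walk_length_eq_dist
  exact (Q.dist_lt_of_mem_support_of_length_eq_dist hQ (h Q) hus.symm).not_ge hd

namespace IsTree

variable (hG : G.IsTree) {w s : V}
include hG

lemma mem_subtree_of_adj {y : V} (h : G.Adj s y) (hd : G.dist s w ≤ G.dist y w) :
    y ∈ G.subtree w s := by
  classical
  obtain ⟨Q, hQ⟩ := hG.connected.exists_walk_length_eq_dist s w
  have hyQ : y ∉ Q.support := fun hy =>
    (Q.dist_lt_of_mem_support_of_length_eq_dist hQ hy h.ne.symm).not_ge hd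
  have hP : (cons h.symm Q).IsPath := (Q.isPath_of_length_eq_dist hQ).cons hyQ
  intro W
  have hW : W.bypass = cons h.symm Q :=
    congrArg Subtype.val
      ((hG.isAcyclic.subsingleton_path _ _).elim ⟨_, W.bypass_isPath⟩ ⟨_, hP⟩)
  exact W.support_bypass_subset_support (by simp [hW])

lemma mem_subtree_of_isPath_of_start {b v : V} {R : G.Walk s b} (hR : R.IsPath)
    (hd : ∀ t ∈ R.support, G.dist s w ≤ G.dist t w) (hv : v ∈ R.support) :
    v ∈ G.subtree w s := by
  classical
  cases R with
  | nil =>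
    obtain rfl : v = s := by simpa using hv
    exact mem_subtree_self w v
  | @cons _ y _ h R' =>
    rw [cons_isPath_iff] at hR
    rw [support_cons, List.mem_cons] at hv
    rcases hv with rfl | hv
    · exact mem_subtree_self w v
    · have hy : y ∈ G.subtree w s := hG.mem_subtree_of_adj h (hd y (by simp))
      exact mem_subtree_of_walk hy (R'.takeUntil v hv)
        fun hs => hR.2 (R'.support_takeUntil_subset_support hv hs)

lemma mem_subtree_of_isPath {a b v : V} {p : G.Walk a b} (hp : p.IsPath) (hs : s ∈ p.support)
    (hd : ∀ t ∈ p.support, G.dist s w ≤ G.dist t w) (hv : v ∈ p.support) :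
    v ∈ G.subtree w s := by
  classical
  rw [← p.take_spec hs, mem_support_append_iff] at hv
  rcases hv with hv | hv
  · exact hG.mem_subtree_of_isPath_of_start (hp.takeUntil hs).reverse
      (fun t ht => hd t (p.support_takeUntil_subset_support hs (by simpa using ht)))
      (by simpa using hv)
  · exact hG.mem_subtree_of_isPath_of_start (hp.dropUntil hs)
      (fun t ht => hd t (p.support_dropUntil_subset_support hs ht)) hv

end IsTree

section Inner

variable {w s v u c d : V} {q : G.Walk c d}

lemma Walk.IsPath.ne_start_of_mem_subtree (hq : q.IsPath) (hv : v ∈ q.support)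
    (hvs : v ∈ G.subtree w s) (hvne : v ≠ s) (hu : u ∈ q.support) (hus : u ∉ G.subtree w s) :
    s ≠ c := by
  rintro rfl
  cases q with
  | nil => exact hvne (by simpa using hv)
  | cons h q' =>
    have hune : u ≠ s := fun h => hus (by rw [h]; exact mem_subtree_self w s)
    rw [support_cons, List.mem_cons] at hv hu
    exact ((cons_isPath_iff _ _).1 hq).2 (q'.mem_support_of_mem_subtree_of_notMem_subtree
      (hv.resolve_left hvne) hvs (hu.resolve_left hune) hus)

lemma Walk.IsPath.mem_support_of_mem_subtree (hq : q.IsPath) (hv : v ∈ q.support)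
    (hvs : v ∈ G.subtree w s) (hvne : v ≠ s) (hu : u ∈ q.support) (hus : u ∉ G.subtree w s) :
    s ∈ q.support ∧ s ≠ c ∧ s ≠ d :=
  ⟨q.mem_support_of_mem_subtree_of_notMem_subtree hv hvs hu hus,
    hq.ne_start_of_mem_subtree hv hvs hvne hu hus,
    hq.reverse.ne_start_of_mem_subtree (by simpa using hv) hvs hvne (by simpa using hu) hus⟩

lemma Connected.mem_support_of_edges_inter {a b s₀ : V} (hG : G.Connected) {p : G.Walk a b}
    (hp : ∀ v ∈ p.support, v ∈ G.subtree w s) (hq : q.IsPath)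
    (hpq : ∃ e ∈ p.edges, e ∈ q.edges) (hs₀ : s₀ ∈ q.support)
    (hd : G.dist s₀ w ≤ G.dist s w) (hend : s₀ = s → s₀ ≠ c ∧ s₀ ≠ d) :
    s ∈ q.support ∧ s ≠ c ∧ s ≠ d := by
  by_cases hs₀s : s₀ = s
  · subst hs₀s
    exact ⟨hs₀, hend rfl⟩
  obtain ⟨e, hep, heq⟩ := hpq
  obtain ⟨v, hvp, hvq, hvs⟩ : ∃ v ∈ p.support, v ∈ q.support ∧ v ≠ s := by
    induction e using Sym2.ind with
    | _ x y =>
      by_cases hx : x = s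
      · exact ⟨y, p.snd_mem_support_of_mem_edges hep, q.snd_mem_support_of_mem_edges heq,
          fun hy => (p.adj_of_mem_edges hep).ne (hx.trans hy.symm)⟩
      · exact ⟨x, p.fst_mem_support_of_mem_edges hep, q.fst_mem_support_of_mem_edges heq, hx⟩
  exact hq.mem_support_of_mem_subtree hvq (hp v hvp) hvs hs₀
    (notMem_subtree_of_dist_le (hG s₀ w) hs₀s hd)

end Inner

lemma Walk.IsPath.ncard_neighborSet_toSubgraph_eq_two {u v x : V}
    {p : G.Walk u v} (hp : p.IsPath) (hx : x ∈ p.support) (hxu : x ≠ u) (hxv : x ≠ v) :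
    (p.toSubgraph.neighborSet x).ncard = 2 := by
  classical
  have hpos : (p.takeUntil x hx).length ≠ 0 := fun h0 => hxu <| by
    simpa [h0] using (p.getVert_length_takeUntil hx).symm
  simpa [p.getVert_length_takeUntil hx] using
    hp.ncard_neighborSet_toSubgraph_internal_eq_two hpos (length_takeUntil_lt_length hx hxv)

lemma exists_mem_edges_of_degree_le_three {s c d c' d' : V} [Fintype (G.neighborSet s)]
    (hdeg : G.degree s ≤ 3) {q : G.Walk c d} {q' : G.Walk c' d'}
    (hq : (q.toSubgraph.neighborSet s).ncard = 2) (hq' : (q'.toSubgraph.neighborSet s).ncard = 2) :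
    ∃ e ∈ q.edges, e ∈ q'.edges := by
  obtain ⟨z, hz, hz'⟩ : (q.toSubgraph.neighborSet s ∩ q'.toSubgraph.neighborSet s).Nonempty := by
    have hA := q.toSubgraph.neighborSet_subset s
    have hB := q'.toSubgraph.neighborSet_subset s
    have hN : (G.neighborSet s).Finite := Set.toFinite _
    have hunion := Set.ncard_le_ncard (Set.union_subset hA hB) hN
    rw [Set.ncard_eq_toFinset_card' (G.neighborSet s), ← neighborFinset_def,
      card_neighborFinset_eq_degree] at hunion
    have := Set.ncard_union_add_ncard_inter _ _ (hN.subset hA) (hN.subset hB)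
    rw [← Set.ncard_pos ((hN.subset hA).inter_of_left _)]
    omega
  exact ⟨s(s, z), adj_toSubgraph_iff_mem_edges.1 hz, adj_toSubgraph_iff_mem_edges.1 hz'⟩

end SimpleGraph

open SimpleGraph in
theorem stmt_15_general {V : Type*} [Fintype V] (T : SimpleGraph V)
    [DecidableRel T.Adj] (hT : T.IsTree) (w : V)
    {a b : V} (p : T.Walk a b) (hp : p.IsPath)
    (sp : V) (hsp : sp ∈ p.support)
    (hspmin : ∀ v ∈ p.support, T.dist sp w ≤ T.dist v w)
    (hdegsp : T.degree sp ≤ 3)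
    {c d c' d' : V} (q : T.Walk c d) (q' : T.Walk c' d')
    (hq : q.IsPath) (hq' : q'.IsPath)
    (sq : V) (hsq : sq ∈ q.support)
    (hqle : T.dist sq w ≤ T.dist sp w)
    (hqend : sq = sp → sq ≠ c ∧ sq ≠ d)
    (sq' : V) (hsq' : sq' ∈ q'.support)
    (hq'le : T.dist sq' w ≤ T.dist sp w)
    (hq'end : sq' = sp → sq' ≠ c' ∧ sq' ≠ d')
    (hqint : ∃ e ∈ p.edges, e ∈ q.edges)
    (hq'int : ∃ e ∈ p.edges, e ∈ q'.edges) :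
    ∃ e ∈ q.edges, e ∈ q'.edges := by
  have hsub : ∀ v ∈ p.support, v ∈ T.subtree w sp := fun v =>
    hT.mem_subtree_of_isPath hp hsp hspmin
  obtain ⟨hspq, hspc, hspd⟩ :=
    hT.connected.mem_support_of_edges_inter hsub hq hqint hsq hqle hqend
  obtain ⟨hspq', hspc', hspd'⟩ :=
    hT.connected.mem_support_of_edges_inter hsub hq' hq'int hsq' hq'le hq'end
  exact exists_mem_edges_of_degree_le_three hdegsp
    (hq.ncard_neighborSet_toSubgraph_eq_two hspq hspc hspd)
    (hq'.ncard_neighborSet_toSubgraph_eq_two hspq' hspc' hspd')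

/-- In a tree rooted at a leaf `w`, let `p` be a path whose peak `sp` is internal with
`deg(sp) ≤ 3`. If `q` and `q'` are two distinct paths, each of priority at most that of
`p` (peak no farther from `w`, and if the peak equals `sp` then it is not an endpoint),
and each edge-intersects `p`, then `q` and `q'` edge-intersect each other. -/
theorem stmt_15 {V : Type*} [Fintype V] [DecidableEq V] (T : SimpleGraph V)
    [DecidableRel T.Adj] (hT : T.IsTree) (w : V) (hw : T.degree w = 1)
    {a b : V} (p : T.Walk a b) (hp : p.IsPath)
    (sp : V) (hsp : sp ∈ p.support)
    (hspmin : ∀ v ∈ p.support, T.dist sp w ≤ T.dist v w)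
    (hint : sp ≠ a ∧ sp ≠ b) (hdegsp : T.degree sp ≤ 3)
    {c d c' d' : V} (q : T.Walk c d) (q' : T.Walk c' d')
    (hq : q.IsPath) (hq' : q'.IsPath)
    (hne : q.edges ≠ q'.edges)
    (sq : V) (hsq : sq ∈ q.support)
    (hsqmin : ∀ v ∈ q.support, T.dist sq w ≤ T.dist v w)
    (hqle : T.dist sq w ≤ T.dist sp w)
    (hqend : sq = sp → sq ≠ c ∧ sq ≠ d)
    (sq' : V) (hsq' : sq' ∈ q'.support)
    (hsq'min : ∀ v ∈ q'.support, T.dist sq' w ≤ T.dist v w)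
    (hq'le : T.dist sq' w ≤ T.dist sp w)
    (hq'end : sq' = sp → sq' ≠ c' ∧ sq' ≠ d')
    (hqint : ∃ e ∈ p.edges, e ∈ q.edges)
    (hq'int : ∃ e ∈ p.edges, e ∈ q'.edges) :
    ∃ e ∈ q.edges, e ∈ q'.edges :=
  stmt_15_general T hT w p hp sp hsp hspmin hdegsp q q' hq hq' sq hsq hqle hqend sq' hsq' hq'le
    hq'end hqint hq'int
end
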